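/- arXiv:1703.10081 — 5 statements merged into one kernel-verified Lean document; each statement's English description precedes it below -/
import Mathlib

section
/- Let A be a finite alphabet, let X ⊆ A* be a recognizable set, and let 𝒜 be a trim deterministic finite automaton recognizing X. Then the deterministic reversal of 𝒜 (the determinization of the reversal of 𝒜) is isomorphic to the minimal automaton of the reversal X̃ of X. -/
namespace Birec

variable {A : Type*}

/-- The left quotient `u⁻¹S = {v | u v ∈ S}`. -/
def leftQuot (S : Set (List A)) (u : List A) : Set (List A) := {v | u ++ v ∈ S}

/-- The reversal `S̃` of a language. -/
def langRev (S : Set (List A)) : Set (List A) := {w | w.reverse ∈ S}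

lemma leftQuot_leftQuot (L : Set (List A)) (u v : List A) :
    leftQuot (leftQuot L u) v = leftQuot L (u ++ v) := by
  ext w; simp [leftQuot, List.append_assoc]

/-- A deterministic automaton with partial transition function. -/
structure PDFA (A : Type*) (Q : Type*) where
  step : Q → A → Option Q
  init : Q
  accept : Set Q

namespace PDFA

variable {Q : Type*}

/-- The (partial) action of words on states. -/
def evalFrom (M : PDFA A Q) : Q → List A → Option Q
  | q, [] => some q
  | q, a :: w => match M.step q a with
    | none => none
    | some p => evalFrom M p w

variable (M : PDFA A Q)

/-- The language recognized by the automaton. -/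
def lang : Set (List A) := {w | ∃ q : Q, M.evalFrom M.init w = some q ∧ q ∈ M.accept}

/-- The automaton is trim: every state is accessible and co-accessible. -/
def Trim : Prop :=
  ∀ q : Q, (∃ u : List A, M.evalFrom M.init u = some q) ∧
    ∃ (v : List A) (t : Q), M.evalFrom q v = some t ∧ t ∈ M.accept

/-- The set `w · T` of states from which `w` leads into the terminal set. -/
def backSet (w : List A) : Set Q := {q | ∃ t : Q, M.evalFrom q w = some t ∧ t ∈ M.accept}

lemma backSet_cons (a : A) (w : List A) :
    M.backSet (a :: w) = {q | ∃ p ∈ M.backSet w, M.step q a = some p} := by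
  ext q
  simp only [backSet, Set.mem_setOf_eq, evalFrom]
  cases h : M.step q a <;> simp [h]

/-- The states of the deterministic reversal `Ã^δ`: the nonempty sets `w · T`. -/
def RevState := {U : Set Q // U.Nonempty ∧ ∃ w : List A, U = M.backSet w}

open Classical in
/-- The (partial) transition function of the deterministic reversal `Ã^δ`. -/
noncomputable def revStep (s : M.RevState) (a : A) : Option M.RevState :=
  if h : {q : Q | ∃ p ∈ s.1, M.step q a = some p}.Nonempty then
    some ⟨{q : Q | ∃ p ∈ s.1, M.step q a = some p}, h, by
      obtain ⟨w, hw⟩ := s.2.2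
      exact ⟨a :: w, by rw [hw, backSet_cons]⟩⟩
  else none

end PDFA

/-- The states of the minimal automaton of a language `L`:
the nonempty left quotients of `L`. -/
def MinState (L : Set (List A)) := {q : Set (List A) // q.Nonempty ∧ ∃ u : List A, q = leftQuot L u}

open Classical in
/-- The (partial) transition function of the minimal automaton of `L`. -/
noncomputable def minStep {L : Set (List A)} (s : MinState L) (a : A) : Option (MinState L) :=
  if h : (leftQuot s.1 [a]).Nonempty then
    some ⟨leftQuot s.1 [a], h, by
      obtain ⟨u, hu⟩ := s.2.2
      exact ⟨u ++ [a], by rw [hu, leftQuot_leftQuot]⟩⟩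
  else none

end Birec

/-!
The set `U ⊆ Q` of states of `𝒜` is sent to the set of words whose reversal leads from `i`
into `U`. For `U = w · T` this is the left quotient `w̃⁻¹ X̃`, and the transitions of the two
automata correspond. Since every state of `𝒜` is accessible, `U` is recovered from this
language, so the correspondence is a bijection.
-/

namespace Birec
namespace PDFA

variable {A Q : Type*} (M : PDFA A Q)

def Accessible : Prop := ∀ q : Q, ∃ u : List A, M.evalFrom M.init u = some q

lemma Trim.accessible {M : PDFA A Q} (hM : M.Trim) : M.Accessible := fun q => (hM q).1

lemma evalFrom_append (q : Q) (u v : List A) :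
    M.evalFrom q (u ++ v) = (M.evalFrom q u).bind (fun p => M.evalFrom p v) := by
  induction u generalizing q with
  | nil => rfl
  | cons a u ih =>
    simp only [List.cons_append, evalFrom]
    cases M.step q a <;> simp [ih]

lemma evalFrom_singleton (q : Q) (a : A) : M.evalFrom q [a] = M.step q a := by
  simp only [evalFrom]
  cases M.step q a <;> rfl

/-- The reversal of the language recognized by `M` with `U` as its set of terminal states. -/
def langRevInto (U : Set Q) : Set (List A) :=
  {v | ∃ q ∈ U, M.evalFrom M.init v.reverse = some q}

lemma langRevInto_accept : M.langRevInto M.accept = langRev M.lang := by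
  ext v
  simp only [langRevInto, langRev, lang, Set.mem_ofPred_eq]
  exact exists_congr fun _ => and_comm

lemma nil_mem_langRevInto_iff (U : Set Q) : [] ∈ M.langRevInto U ↔ M.init ∈ U := by
  simp [langRevInto, evalFrom]

lemma langRevInto_backSet (w : List A) :
    M.langRevInto (M.backSet w) = leftQuot (langRev M.lang) w.reverse := by
  ext v
  simp only [langRevInto, backSet, leftQuot, langRev, lang, Set.mem_ofPred_eq,
    List.reverse_append, List.reverse_reverse, evalFrom_append]
  constructor
  · rintro ⟨q, ⟨t, ht, hta⟩, hq⟩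
    exact ⟨t, by rw [hq]; exact ht, hta⟩
  · rintro ⟨t, ht, hta⟩
    obtain ⟨q, hq, hqt⟩ := Option.bind_eq_some_iff.1 ht
    exact ⟨q, ⟨t, hqt, hta⟩, hq⟩

lemma langRevInto_step (U : Set Q) (a : A) :
    M.langRevInto {q | ∃ p ∈ U, M.step q a = some p} = leftQuot (M.langRevInto U) [a] := by
  ext v
  simp only [langRevInto, leftQuot, Set.mem_ofPred_eq, List.singleton_append,
    List.reverse_cons, evalFrom_append, Option.bind_eq_some_iff, evalFrom_singleton]
  constructor
  · rintro ⟨q, ⟨p, hpU, hp⟩, hq⟩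
    exact ⟨p, hpU, q, hq, hp⟩
  · rintro ⟨p, hpU, q, hq, hp⟩
    exact ⟨q, ⟨p, hpU, hp⟩, hq⟩

lemma mem_iff_reverse_mem_langRevInto {U : Set Q} {q : Q} {u : List A}
    (hu : M.evalFrom M.init u = some q) : q ∈ U ↔ u.reverse ∈ M.langRevInto U := by
  simp [langRevInto, hu]

variable {M}

lemma nonempty_of_langRevInto_nonempty {U : Set Q} (h : (M.langRevInto U).Nonempty) :
    U.Nonempty :=
  let ⟨_, q, hq, _⟩ := h
  ⟨q, hq⟩

lemma langRevInto_nonempty_iff (hM : M.Accessible) {U : Set Q} :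
    (M.langRevInto U).Nonempty ↔ U.Nonempty := by
  refine ⟨nonempty_of_langRevInto_nonempty, fun ⟨q, hq⟩ => ?_⟩
  obtain ⟨u, hu⟩ := hM q
  exact ⟨u.reverse, (M.mem_iff_reverse_mem_langRevInto hu).1 hq⟩

lemma langRevInto_injective (hM : M.Accessible) : Function.Injective M.langRevInto := by
  intro U V h
  ext q
  obtain ⟨u, hu⟩ := hM q
  rw [M.mem_iff_reverse_mem_langRevInto hu, M.mem_iff_reverse_mem_langRevInto hu, h]

/-- The state `w · T` of the deterministic reversal is sent to the left quotient `w̃⁻¹ X̃`. -/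
def toMinState (hM : M.Accessible) (s : M.RevState) : MinState (langRev M.lang) :=
  ⟨M.langRevInto s.1, (langRevInto_nonempty_iff hM).2 s.2.1, by
    obtain ⟨w, hw⟩ := s.2.2
    exact ⟨w.reverse, hw ▸ M.langRevInto_backSet w⟩⟩

lemma toMinState_bijective (hM : M.Accessible) : Function.Bijective (toMinState hM) := by
  refine ⟨fun s t hst => Subtype.ext (langRevInto_injective hM (congrArg Subtype.val hst)), ?_⟩
  rintro ⟨V, hV, u, rfl⟩
  have hback : M.langRevInto (M.backSet u.reverse) = leftQuot (langRev M.lang) u := by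
    simpa using M.langRevInto_backSet u.reverse
  refine ⟨⟨M.backSet u.reverse, ?_, u.reverse, rfl⟩, Subtype.ext hback⟩
  exact nonempty_of_langRevInto_nonempty (hback ▸ hV)

lemma map_revStep_toMinState (hM : M.Accessible) (s : M.RevState) (a : A) :
    Option.map (toMinState hM) (M.revStep s a) = minStep (toMinState hM s) a := by
  have hstep := M.langRevInto_step s.1 a
  unfold revStep minStep
  split_ifs with h h' h'
  · exact congrArg some (Subtype.ext hstep)
  · exact absurd (hstep ▸ (langRevInto_nonempty_iff hM).2 h) h'
  · exact absurd ((langRevInto_nonempty_iff hM).1 (hstep ▸ h')) h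
  · rfl

end PDFA
end Birec

open Birec

theorem deterministic_reversal_is_minimal_general {A Q : Type*}
    (M : PDFA A Q) (hM : M.Trim) :
    ∃ e : M.RevState ≃ MinState (langRev M.lang),
      (∀ s : M.RevState, s.1 = M.accept → (e s).1 = langRev M.lang) ∧
      (∀ (s : M.RevState) (a : A), Option.map e (M.revStep s a) = minStep (e s) a) ∧
      (∀ s : M.RevState, M.init ∈ s.1 ↔ [] ∈ (e s).1) := by
  have hacc := hM.accessible
  refine ⟨Equiv.ofBijective _ (PDFA.toMinState_bijective hacc), fun s hs => ?_,
    PDFA.map_revStep_toMinState hacc, fun s => ?_⟩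
  · change M.langRevInto s.1 = _
    rw [hs, M.langRevInto_accept]
  · exact (M.nil_mem_langRevInto_iff s.1).symm

/-- **Proposition.** If `𝒜` is a trim deterministic finite automaton recognizing `X`, then
the deterministic reversal `𝒜̃^δ` of `𝒜` is isomorphic to the minimal automaton of the
reversal `X̃` of `X`:  there is a bijection between the states which sends the initial
state `T` of `𝒜̃^δ` to the initial state `X̃` of the minimal automaton, commutes with the
(partial) transition functions, and preserves terminal states. -/
theorem deterministic_reversal_is_minimal {A Q : Type*} [Fintype A] [Fintype Q]
    (M : PDFA A Q) (hM : M.Trim) :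
    ∃ e : M.RevState ≃ MinState (langRev M.lang),
      (∀ s : M.RevState, s.1 = M.accept → (e s).1 = langRev M.lang) ∧
      (∀ (s : M.RevState) (a : A), Option.map e (M.revStep s a) = minStep (e s) a) ∧
      (∀ s : M.RevState, M.init ∈ s.1 ↔ [] ∈ (e s).1) :=
  deterministic_reversal_is_minimal_general M hM
end

section
/- Let 𝒜 be a strongly connected, complete, finite deterministic automaton. Two states p, q of 𝒜 are strongly synchronizable if and only if p·x = q·x for every word x of minimal rank in 𝒜. -/
namespace Birec

variable {A Q : Type*}

/-- The action of a word on a state of a complete deterministic automaton with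
transition function `step`. -/
def dEval (step : Q → A → Q) (q : Q) (w : List A) : Q := w.foldl step q

/-- The rank of a word: the cardinality of the image of the map `q ↦ q · w`. -/
noncomputable def dRank (step : Q → A → Q) (w : List A) : ℕ :=
  (Set.range fun q : Q => dEval step q w).ncard

/-- Two states are synchronizable if some word maps them to the same state. -/
def Synchronizable (step : Q → A → Q) (p q : Q) : Prop :=
  ∃ v : List A, dEval step p v = dEval step q v

/-- Two states are strongly synchronizable if all their translates are synchronizable. -/
def StronglySynchronizable (step : Q → A → Q) (p q : Q) : Prop :=
  ∀ u : List A, Synchronizable step (dEval step p u) (dEval step q u)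

lemma dEval_append (step : Q → A → Q) (q : Q) (u v : List A) :
    dEval step q (u ++ v) = dEval step (dEval step q u) v := by
  simp [dEval, List.foldl_append]

lemma range_append (step : Q → A → Q) (x v : List A) :
    (Set.range fun q : Q => dEval step q (x ++ v)) =
      (fun r => dEval step r v) '' (Set.range fun q : Q => dEval step q x) := by
  ext r
  constructor
  · rintro ⟨s, rfl⟩; exact ⟨dEval step s x, ⟨s, rfl⟩, (dEval_append step s x v).symm⟩
  · rintro ⟨t, ⟨s, rfl⟩, rfl⟩; exact ⟨s, dEval_append step s x v⟩

lemma dRank_append_right_le [Fintype Q] (step : Q → A → Q) (x v : List A) :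
    dRank step (x ++ v) ≤ dRank step x := by
  rw [dRank, range_append]
  exact Set.ncard_image_le (Set.toFinite _)

lemma dRank_append_left_le [Fintype Q] (step : Q → A → Q) (u x : List A) :
    dRank step (u ++ x) ≤ dRank step x := by
  apply Set.ncard_le_ncard _ (Set.toFinite _)
  rintro r ⟨s, rfl⟩
  exact ⟨dEval step s u, (dEval_append step s u x).symm⟩

end Birec

open Birec

/-- **Proposition.** Let `𝒜` be a strongly connected and complete finite deterministic
automaton.  Two states `p, q` of `𝒜` are strongly synchronizable if and only if
`p · x = q · x` for every word `x` of minimal rank. -/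
theorem stronglySynchronizable_iff {A Q : Type*} [Fintype A] [Fintype Q]
    (step : Q → A → Q)
    (hconn : ∀ p q : Q, ∃ w : List A, dEval step p w = q) (p q : Q) :
    StronglySynchronizable step p q ↔
      ∀ x : List A, (∀ y : List A, dRank step x ≤ dRank step y) →
        dEval step p x = dEval step q x := by
  constructor
  · intro h x hx
    obtain ⟨v, hv⟩ := h x
    -- `·v` is injective on the range of `·x`, since `x` has minimal rank
    have hcard : ((fun r => dEval step r v) ''
        (Set.range fun q : Q => dEval step q x)).ncard
        = (Set.range fun q : Q => dEval step q x).ncard := by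
      have h1 := dRank_append_right_le step x v
      have h2 := hx (x ++ v)
      have : dRank step (x ++ v) = dRank step x := le_antisymm h1 h2
      rw [dRank, dRank, range_append] at this
      exact this
    have hinj := Set.injOn_of_ncard_image_eq hcard (Set.toFinite _)
    exact hinj ⟨p, rfl⟩ ⟨q, rfl⟩ hv
  · intro h u
    obtain ⟨x, hx⟩ := Nat.sInf_mem (⟨dRank step [], [], rfl⟩ :
      (Set.range (dRank step)).Nonempty)
    have hmin : ∀ y : List A, dRank step x ≤ dRank step y := fun y => by
      rw [hx]; exact Nat.sInf_le ⟨y, rfl⟩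
    refine ⟨x, ?_⟩
    have := h (u ++ x) (fun y => le_trans (dRank_append_left_le step u x) (hmin y))
    rwa [dEval_append, dEval_append] at this
end

section
/- Let X be a recognizable maximal prefix code over a finite alphabet A. If X is indecomposable, then either X is synchronized, or X is the left root of a dense birecurrent set. -/
namespace Birec

variable {A : Type*}

/-- A language is recognizable iff it has finitely many left quotients (Nerode). -/
def Recognizable (S : Set (List A)) : Prop := (Set.range (leftQuot S)).Finite

/-- A recognizable set is recurrent if its minimal automaton (whose states are the
nonempty left quotients) is strongly connected. -/
def Recurrent (S : Set (List A)) : Prop :=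
  Recognizable S ∧
    ∀ u v : List A, (leftQuot S u).Nonempty → (leftQuot S v).Nonempty →
      ∃ w : List A, leftQuot S (u ++ w) = leftQuot S v

/-- A set is birecurrent if it is recurrent together with its reversal. -/
def Birecurrent (S : Set (List A)) : Prop := Recurrent S ∧ Recurrent (langRev S)

/-- A set is dense if every word is a factor of one of its words. -/
def LangDense (S : Set (List A)) : Prop := ∀ v : List A, ∃ u w : List A, u ++ v ++ w ∈ S

end Birec
namespace Birec

variable {A : Type*}

/-- A prefix code: a set of nonempty words, none of which is a proper prefix of another. -/
def IsPrefixCode (X : Set (List A)) : Prop :=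
  [] ∉ X ∧ ∀ x ∈ X, ∀ y ∈ X, x <+: y → x = y

/-- A suffix code: a set of nonempty words, none of which is a proper suffix of another. -/
def IsSuffixCode (X : Set (List A)) : Prop :=
  [] ∉ X ∧ ∀ x ∈ X, ∀ y ∈ X, x <:+ y → x = y

/-- A bifix code is both prefix and suffix. -/
def IsBifixCode (X : Set (List A)) : Prop := IsPrefixCode X ∧ IsSuffixCode X

/-- A code: every word has at most one factorization into words of `X`. -/
def IsCode (X : Set (List A)) : Prop :=
  [] ∉ X ∧ ∀ l m : List (List A), (∀ x ∈ l, x ∈ X) → (∀ x ∈ m, x ∈ X) →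
    l.flatten = m.flatten → l = m

/-- The submonoid `X*` generated by a set of words. -/
def star (X : Set (List A)) : Set (List A) :=
  {w | ∃ l : List (List A), (∀ x ∈ l, x ∈ X) ∧ l.flatten = w}

/-- Product of two languages. -/
def setMul (X Y : Set (List A)) : Set (List A) := {w | ∃ x ∈ X, ∃ y ∈ Y, w = x ++ y}

/-- The proper prefixes of words of `X`. -/
def properPrefixes (X : Set (List A)) : Set (List A) := {p | ∃ x ∈ X, p <+: x ∧ p ≠ x}

/-- The proper suffixes of words of `X`. -/
def properSuffixes (X : Set (List A)) : Set (List A) := {p | ∃ x ∈ X, p <:+ x ∧ p ≠ x}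

def IsMaximalPrefixCode (X : Set (List A)) : Prop :=
  IsPrefixCode X ∧ ∀ Y : Set (List A), IsPrefixCode Y → X ⊆ Y → Y = X

def IsMaximalSuffixCode (X : Set (List A)) : Prop :=
  IsSuffixCode X ∧ ∀ Y : Set (List A), IsSuffixCode Y → X ⊆ Y → Y = X

def IsMaximalBifixCode (X : Set (List A)) : Prop :=
  IsBifixCode X ∧ ∀ Y : Set (List A), IsBifixCode Y → X ⊆ Y → Y = X

def IsMaximalCode (X : Set (List A)) : Prop :=
  IsCode X ∧ ∀ Y : Set (List A), IsCode Y → X ⊆ Y → Y = X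

end Birec
namespace Birec

variable {A : Type*}

/-- The stabilizer of the initial state of the minimal automaton of `S`:
the submonoid recognized by `(Q, i, i)`. -/
def stab (S : Set (List A)) : Set (List A) := {w | leftQuot S w = S}

/-- The left root of a recurrent set: the prefix code generating the submonoid
recognized by the minimal automaton with the initial state as unique terminal state,
i.e. the minimal generating set of that submonoid. -/
def leftRoot (S : Set (List A)) : Set (List A) :=
  {w | w ∈ stab S ∧ w ≠ [] ∧
    ¬∃ u v : List A, u ∈ stab S ∧ v ∈ stab S ∧ u ≠ [] ∧ v ≠ [] ∧ w = u ++ v}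

/-- The right root of a birecurrent set: the reversal of the left root of the reversal. -/
def rightRoot (S : Set (List A)) : Set (List A) := langRev (leftRoot (langRev S))

/-- A birecurrent set is of finite type if its left and right roots are finite. -/
def FiniteType (S : Set (List A)) : Prop := (leftRoot S).Finite ∧ (rightRoot S).Finite

end Birec
namespace Birec

variable {A : Type*}

/-- The states of the minimal automaton of `S`: the nonempty left quotients. -/
def MinStates (S : Set (List A)) : Set (Set (List A)) :=
  {q | q.Nonempty ∧ ∃ u : List A, q = leftQuot S u}

/-- The terminal states of the minimal automaton of `S`. -/
def TerminalStates (S : Set (List A)) : Set (Set (List A)) :=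
  {q | q ∈ MinStates S ∧ [] ∈ q}

/-- The rank of a word in the minimal automaton of `S`: the number of states in the
image of the (partial) map induced by `w` on the states. -/
noncomputable def mrank (S : Set (List A)) (w : List A) : ℕ :=
  {T : Set (List A) | T.Nonempty ∧ ∃ u : List A, T = leftQuot S (u ++ w)}.ncard

/-- `w` is a word of minimal nonzero rank in the minimal automaton of `S`. -/
def IsMinNonzeroMrank (S : Set (List A)) (w : List A) : Prop :=
  mrank S w ≠ 0 ∧ ∀ v : List A, mrank S v ≠ 0 → mrank S w ≤ mrank S v

/-- The set of terminal states is saturated by `w`: it is a union of classes of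
the kernel of `w` (in particular it is contained in the domain of `w`). -/
def SaturatedBy (S : Set (List A)) (w : List A) : Prop :=
  (∀ q ∈ TerminalStates S, (leftQuot q w).Nonempty) ∧
    ∀ p q : Set (List A), p ∈ MinStates S → q ∈ MinStates S →
      (leftQuot p w).Nonempty → (leftQuot q w).Nonempty →
      leftQuot p w = leftQuot q w → ([] ∈ p ↔ [] ∈ q)

/-- The degree of `S`: the minimal nonzero rank of a word in its minimal automaton. -/
noncomputable def langDegree (S : Set (List A)) : ℕ :=
  sInf {n : ℕ | n ≠ 0 ∧ ∃ w : List A, mrank S w = n}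

end Birec

namespace Birec

variable {A : Type*}

lemma mem_leftQuot {S : Set (List A)} {u v : List A} : v ∈ leftQuot S u ↔ u ++ v ∈ S := Iff.rfl

lemma lq_append (S : Set (List A)) (u v : List A) :
    leftQuot S (u ++ v) = leftQuot (leftQuot S u) v := by
  ext t; simp [leftQuot, List.append_assoc]

lemma lq_nil (S : Set (List A)) : leftQuot S [] = S := by
  ext t; simp [leftQuot]

lemma nil_mem_star (X : Set (List A)) : [] ∈ star X := ⟨[], by simp, rfl⟩

lemma mem_star (X : Set (List A)) {x} (hx : x ∈ X) : x ∈ star X :=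
  ⟨[x], by simpa using hx, by simp⟩

lemma star_append {X : Set (List A)} {a b} (ha : a ∈ star X) (hb : b ∈ star X) :
    a ++ b ∈ star X := by
  obtain ⟨l, hl, rfl⟩ := ha; obtain ⟨m, hm, rfl⟩ := hb
  refine ⟨l ++ m, ?_, by simp⟩
  intro x hx; rcases List.mem_append.1 hx with h | h
  exacts [hl x h, hm x h]

lemma star_cases {X : Set (List A)} {v} (hv : v ∈ star X) :
    v = [] ∨ ∃ x m, x ∈ X ∧ m ∈ star X ∧ v = x ++ m := by
  obtain ⟨l, hl, rfl⟩ := hv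
  cases l with
  | nil => exact Or.inl rfl
  | cons x l =>
    exact Or.inr ⟨x, l.flatten, hl x (by simp),
      ⟨l, fun y hy => hl y (by simp [hy]), rfl⟩, by simp⟩

lemma star_left_cancel_aux {X : Set (List A)} (hX : IsPrefixCode X) :
    ∀ l : List (List A), (∀ y ∈ l, y ∈ X) → ∀ m, l.flatten ++ m ∈ star X → m ∈ star X := by
  intro l
  induction l with
  | nil => intro _ m hm; simpa using hm
  | cons x l ih =>
    intro hl m hm
    have hx : x ∈ X := hl x (by simp)
    have hxne : x ≠ [] := fun h => hX.1 (h ▸ hx)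
    have hm' : x ++ (l.flatten ++ m) ∈ star X := by simpa [List.append_assoc] using hm
    rcases star_cases hm' with h | ⟨y, r, hy, hr, he⟩
    · exact absurd (List.append_eq_nil_iff.1 h).1 hxne
    · have hy2 : y <+: x ++ (l.flatten ++ m) := by
        rw [he]; exact List.prefix_append _ _
      have hpre : x <+: y ∨ y <+: x :=
        List.prefix_or_prefix_of_prefix (List.prefix_append _ _) hy2
      have hxy : x = y := by
        rcases hpre with h | h
        · exact hX.2 x hx y hy h
        · exact (hX.2 y hy x hx h).symm
      subst hxy
      have hcan : l.flatten ++ m = r := List.append_cancel_left he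
      exact ih (fun y hy => hl y (by simp [hy])) m (hcan ▸ hr)

lemma star_cancel {X : Set (List A)} (hX : IsPrefixCode X) {x m : List A}
    (hx : x ∈ star X) (h : x ++ m ∈ star X) : m ∈ star X := by
  obtain ⟨l, hl, rfl⟩ := hx; exact star_left_cancel_aux hX l hl m h

lemma lq_star_left {X : Set (List A)} (hX : IsPrefixCode X) {x : List A} (hx : x ∈ star X)
    (u : List A) : leftQuot (star X) (x ++ u) = leftQuot (star X) u := by
  ext t
  simp only [leftQuot, Set.mem_setOf_eq, List.append_assoc]
  exact ⟨fun h => star_cancel hX hx h, fun h => star_append hx h⟩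

lemma right_complete {X : Set (List A)} (hmax : IsMaximalPrefixCode X) :
    ∀ u : List A, ∃ v, u ++ v ∈ star X := by
  have key : ∀ n (u : List A), u.length ≤ n → ∃ v, u ++ v ∈ star X := by
    intro n
    induction n with
    | zero =>
      intro u hu
      have h0 : u = [] := List.length_eq_zero_iff.1 (Nat.le_zero.1 hu)
      exact ⟨[], by simp [h0, nil_mem_star]⟩
    | succ n ih =>
      intro u hu
      by_cases h2 : ∃ x ∈ X, u <+: x
      · obtain ⟨x, hx, v, rfl⟩ := h2
        exact ⟨v, mem_star X hx⟩
      by_cases h1 : ∃ x ∈ X, x <+: u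
      · obtain ⟨x, hx, u', rfl⟩ := h1
        have hxne : x ≠ [] := fun h => hmax.1.1 (h ▸ hx)
        have hlen : u'.length ≤ n := by
          have h' := hu
          simp only [List.length_append] at h'
          have hx1 : 1 ≤ x.length := List.length_pos_iff.2 hxne
          omega
        obtain ⟨v, hv⟩ := ih u' hlen
        exact ⟨v, by rw [List.append_assoc]; exact star_append (mem_star X hx) hv⟩
      · by_cases hu0 : u = []
        · exact ⟨[], by simp [hu0, nil_mem_star]⟩
        · exfalso
          have hY : IsPrefixCode (X ∪ {u}) := by
            constructor
            · rintro (h | h)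
              · exact hmax.1.1 h
              · have h' : u = [] := (Set.mem_singleton_iff.1 h).symm
                exact hu0 h'
            · rintro a (ha | ha) b (hb | hb) hab
              · exact hmax.1.2 a ha b hb hab
              · refine absurd ⟨a, ha, ?_⟩ h1
                rwa [Set.mem_singleton_iff.1 hb] at hab
              · refine absurd ⟨b, hb, ?_⟩ h2
                rwa [Set.mem_singleton_iff.1 ha] at hab
              · rw [Set.mem_singleton_iff.1 ha, Set.mem_singleton_iff.1 hb]
          have hXu := hmax.2 _ hY Set.subset_union_left
          have : u ∈ X := hXu ▸ (Set.mem_union_right _ rfl)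
          exact h2 ⟨u, this, List.prefix_refl u⟩
  intro u; exact key u.length u le_rfl

lemma lq_decomp {X : Set (List A)} (hX : IsPrefixCode X) :
    ∀ u : List A, leftQuot (star X) u = star X ∨
      ∃ p, leftQuot (star X) u = setMul (leftQuot X p) (star X) := by
  have key : ∀ n (u : List A), u.length ≤ n → leftQuot (star X) u = star X ∨
      ∃ p, leftQuot (star X) u = setMul (leftQuot X p) (star X) := by
    intro n
    induction n with
    | zero =>
      intro u hu
      have h0 : u = [] := List.length_eq_zero_iff.1 (Nat.le_zero.1 hu)
      exact Or.inl (by rw [h0, lq_nil])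
    | succ n ih =>
      intro u hu
      by_cases h1 : ∃ x ∈ X, x <+: u
      · obtain ⟨x, hx, u', rfl⟩ := h1
        have hxne : x ≠ [] := fun h => hX.1 (h ▸ hx)
        have hlen : u'.length ≤ n := by
          have h' := hu
          simp only [List.length_append] at h'
          have hx1 : 1 ≤ x.length := List.length_pos_iff.2 hxne
          omega
        rw [lq_star_left hX (mem_star X hx)]
        exact ih u' hlen
      · by_cases hu0 : u = []
        · exact Or.inl (by rw [hu0, lq_nil])
        · refine Or.inr ⟨u, ?_⟩
          ext t
          simp only [leftQuot, setMul, Set.mem_setOf_eq]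
          constructor
          · intro h
            rcases star_cases h with h0 | ⟨y, m, hy, hm, he⟩
            · exact absurd (List.append_eq_nil_iff.1 h0).1 hu0
            · have hy2 : y <+: u ++ t := by rw [he]; exact List.prefix_append _ _
              rcases List.prefix_or_prefix_of_prefix hy2 (List.prefix_append u t) with h' | h'
              · exact absurd ⟨y, hy, h'⟩ h1
              · obtain ⟨r, rfl⟩ := h'
                have ht : t = r ++ m := by
                  rw [List.append_assoc] at he
                  exact List.append_cancel_left he
                exact ⟨r, hy, m, hm, ht⟩
          · rintro ⟨r, hr, s, hs, rfl⟩
            rw [← List.append_assoc]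
            exact star_append (mem_star X hr) hs
  intro u; exact key u.length u le_rfl

lemma recog_star {X : Set (List A)} (hX : IsPrefixCode X) (hrec : Recognizable X) :
    (Set.range (leftQuot (star X))).Finite := by
  have hsub : Set.range (leftQuot (star X)) ⊆
      insert (star X) ((fun W => setMul W (star X)) '' Set.range (leftQuot X)) := by
    rintro _ ⟨u, rfl⟩
    rcases lq_decomp hX u with h | ⟨p, h⟩
    · rw [h]; exact Set.mem_insert _ _
    · rw [h]; exact Set.mem_insert_of_mem _ ⟨leftQuot X p, ⟨p, rfl⟩, rfl⟩
  exact ((hrec.image _).insert _).subset hsub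


end Birec

open Birec

/-- **Theorem.** Let `X` be a recognizable maximal prefix code.  If `X` is
indecomposable, then either `X` is synchronized (the degree of the minimal automaton of
`X*` is `1`), or `X` is the left root of a dense birecurrent set. -/
theorem indecomposable_prefix_code {A : Type*} [Fintype A] (X : Set (List A))
    (hrec : Recognizable X) (hmax : IsMaximalPrefixCode X)
    (hind : ∀ Z : Set (List A), IsPrefixCode Z → X ⊆ star Z →
      Z = {l : List A | l.length = 1} ∨ Z = X) :
    langDegree (star X) = 1 ∨
      ∃ S : Set (List A), LangDense S ∧ Birecurrent S ∧ leftRoot S = X := by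

  classical
  by_cases hdeg : langDegree (star X) = 1
  · exact Or.inl hdeg
  right
  have hX : IsPrefixCode X := hmax.1
  have hQfin : (Set.range (leftQuot (star X))).Finite := recog_star hX hrec
  have hqne : ∀ u : List A, (leftQuot (star X) u).Nonempty := by
    intro u
    obtain ⟨v, hv⟩ := right_complete hmax u
    exact ⟨v, hv⟩
  have cong : ∀ {a b : List A}, leftQuot (star X) a = leftQuot (star X) b →
      ∀ t, leftQuot (star X) (a ++ t) = leftQuot (star X) (b ++ t) := by
    intro a b h t; rw [lq_append, lq_append, h]
  have connect : ∀ u v : List A, ∃ z, leftQuot (star X) (u ++ z) = leftQuot (star X) v := by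
    intro u v
    obtain ⟨v₁, hv₁⟩ := right_complete hmax u
    exact ⟨v₁ ++ v, by rw [← List.append_assoc]; exact lq_star_left hX hv₁ v⟩
  have hfinIm : ∀ z : List A, (Set.range fun u => leftQuot (star X) (u ++ z)).Finite := by
    intro z
    apply hQfin.subset
    rintro _ ⟨u, rfl⟩; exact ⟨u ++ z, rfl⟩
  have hmr : ∀ z : List A,
      mrank (star X) z = (Set.range fun u => leftQuot (star X) (u ++ z)).ncard := by
    intro z
    unfold mrank
    congr 1
    ext T
    simp only [Set.mem_setOf_eq, Set.mem_range]
    constructor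
    · rintro ⟨-, u, hu⟩; exact ⟨u, hu.symm⟩
    · rintro ⟨u, hu⟩
      refine ⟨?_, u, hu.symm⟩
      rw [← hu]; exact hqne _
  have hmr0 : ∀ z : List A, mrank (star X) z ≠ 0 := by
    intro z
    rw [hmr]
    exact ((Set.ncard_pos (hfinIm z)).2 ⟨_, ⟨[], rfl⟩⟩).ne'
  have hDne : {n : ℕ | n ≠ 0 ∧ ∃ z : List A, mrank (star X) z = n}.Nonempty :=
    ⟨mrank (star X) [], hmr0 [], [], rfl⟩
  have hdmem : langDegree (star X) ∈ {n : ℕ | n ≠ 0 ∧ ∃ z : List A, mrank (star X) z = n} :=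
    Nat.sInf_mem hDne
  obtain ⟨hd0, w₀, hw₀⟩ := hdmem
  have hdmin : ∀ z : List A, langDegree (star X) ≤ mrank (star X) z := fun z =>
    Nat.sInf_le ⟨hmr0 z, z, rfl⟩
  obtain ⟨y, hy⟩ := connect w₀ []
  set w := w₀ ++ y with hwdef
  have hw_nil : leftQuot (star X) w = star X := by rw [hy, lq_nil]
  have him_w : (Set.range fun u => leftQuot (star X) (u ++ w)) =
      (fun T => leftQuot T y) '' (Set.range fun u => leftQuot (star X) (u ++ w₀)) := by
    ext T
    constructor
    · rintro ⟨u, rfl⟩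
      refine ⟨leftQuot (star X) (u ++ w₀), ⟨u, rfl⟩, ?_⟩
      show leftQuot (leftQuot (star X) (u ++ w₀)) y = leftQuot (star X) (u ++ w)
      rw [← lq_append, List.append_assoc, ← hwdef]
    · rintro ⟨T', ⟨u, rfl⟩, rfl⟩
      refine ⟨u, ?_⟩
      show leftQuot (star X) (u ++ w) = leftQuot (leftQuot (star X) (u ++ w₀)) y
      rw [← lq_append, List.append_assoc, ← hwdef]
  have hw_rank : mrank (star X) w = langDegree (star X) := by
    refine le_antisymm ?_ (hdmin w)
    rw [hmr, him_w, ← hw₀, hmr]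
    exact Set.ncard_image_le (hfinIm w₀)
  have hIm_stable : ∀ b : List A,
      (Set.range fun u => leftQuot (star X) (u ++ (b ++ w))) =
      (Set.range fun u => leftQuot (star X) (u ++ w)) := by
    intro b
    have hsub : (Set.range fun u => leftQuot (star X) (u ++ (b ++ w))) ⊆
        (Set.range fun u => leftQuot (star X) (u ++ w)) := by
      rintro _ ⟨u, rfl⟩
      refine ⟨u ++ b, ?_⟩
      show leftQuot (star X) ((u ++ b) ++ w) = leftQuot (star X) (u ++ (b ++ w))
      rw [List.append_assoc]
    refine Set.eq_of_subset_of_ncard_le hsub ?_ (hfinIm w)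
    calc (Set.range fun u => leftQuot (star X) (u ++ w)).ncard
        = langDegree (star X) := by rw [← hmr, hw_rank]
      _ ≤ mrank (star X) (b ++ w) := hdmin _
      _ = _ := hmr _
  have hXstar_mem : star X ∈ (Set.range fun u => leftQuot (star X) (u ++ w)) := by
    refine ⟨[], ?_⟩
    show leftQuot (star X) ([] ++ w) = star X
    rw [List.nil_append, hw_nil]
  have hreach : ∀ b : List A, ∃ u, leftQuot (star X) (u ++ (b ++ w)) = star X := by
    intro b
    obtain ⟨u, hu⟩ : star X ∈ (Set.range fun u => leftQuot (star X) (u ++ (b ++ w))) := by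
      rw [hIm_stable b]; exact hXstar_mem
    exact ⟨u, hu⟩
  set S : Set (List A) := {u : List A | leftQuot (star X) (u ++ w) = star X} with hSdef
  have hmemS : ∀ u : List A, u ∈ S ↔ leftQuot (star X) (u ++ w) = star X := fun u => Iff.rfl
  have hSq : ∀ u : List A, leftQuot S u =
      {v : List A | leftQuot (star X) (u ++ (v ++ w)) = star X} := by
    intro u; ext v
    rw [mem_leftQuot, hmemS]
    simp only [Set.mem_setOf_eq, List.append_assoc]
  have hScong : ∀ {a b : List A}, leftQuot (star X) a = leftQuot (star X) b →
      leftQuot S a = leftQuot S b := by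
    intro a b h
    rw [hSq, hSq]
    ext v
    simp only [Set.mem_setOf_eq]
    rw [cong h (v ++ w)]
  have hSmem_of : ∀ u z : List A,
      leftQuot (star X) (u ++ z) = leftQuot (star X) [] → (u ++ z) ∈ S := by
    intro u z h
    rw [hmemS, cong h w, List.nil_append, hw_nil]
  have hSqne : ∀ u : List A, (leftQuot S u).Nonempty := by
    intro u
    obtain ⟨z, hz⟩ := connect u []
    exact ⟨z, hSmem_of u z hz⟩
  have hSrec : Recognizable S := by
    have hsub : Set.range (leftQuot S) ⊆
        (fun q => {v : List A | leftQuot q (v ++ w) = star X}) ''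
          Set.range (leftQuot (star X)) := by
      rintro _ ⟨u, rfl⟩
      refine ⟨leftQuot (star X) u, ⟨u, rfl⟩, ?_⟩
      show {v : List A | leftQuot (leftQuot (star X) u) (v ++ w) = star X} = leftQuot S u
      rw [hSq]
      ext v
      simp only [Set.mem_setOf_eq]
      rw [← lq_append]
    exact (hQfin.image _).subset hsub
  have hSrecur : Recurrent S := by
    refine ⟨hSrec, fun u v _ _ => ?_⟩
    obtain ⟨z, hz⟩ := connect u v
    exact ⟨z, hScong hz⟩
  have hSdense : LangDense S := by
    intro v
    obtain ⟨z, hz⟩ := connect v []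
    refine ⟨[], z, ?_⟩
    rw [List.nil_append]
    exact hSmem_of v z hz
  have hK : ∀ b : List A, leftQuot (langRev S) b =
      {v : List A | leftQuot (star X) (v.reverse ++ (b.reverse ++ w)) = star X} := by
    intro b; ext v
    show (b ++ v).reverse ∈ S ↔ _
    rw [List.reverse_append, hmemS]
    simp only [Set.mem_setOf_eq, List.append_assoc]
  have hRrec : Recognizable (langRev S) := by
    have hsub : Set.range (leftQuot (langRev S)) ⊆
        (fun 𝒯 : Set (Set (List A)) => {v : List A | leftQuot (star X) v.reverse ∈ 𝒯}) ''
          {𝒯 : Set (Set (List A)) | 𝒯 ⊆ Set.range (leftQuot (star X))} := by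
      rintro _ ⟨b, rfl⟩
      refine ⟨{q | q ∈ Set.range (leftQuot (star X)) ∧ leftQuot q (b.reverse ++ w) = star X},
        fun q hq => hq.1, ?_⟩
      show {v : List A | leftQuot (star X) v.reverse ∈ _} = leftQuot (langRev S) b
      rw [hK]
      ext v
      simp only [Set.mem_setOf_eq]
      constructor
      · rintro ⟨-, h⟩
        rw [← lq_append] at h
        exact h
      · intro h
        refine ⟨⟨v.reverse, rfl⟩, ?_⟩
        rw [← lq_append]
        exact h
    exact ((hQfin.finite_subsets).image _).subset hsub
  have hRconn : ∀ b c : List A, ∃ z : List A,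
      leftQuot (langRev S) (b ++ z) = leftQuot (langRev S) c := by
    intro b c
    obtain ⟨y₂, hy₂⟩ := hreach b.reverse
    have hcompat : ∀ u : List A,
        leftQuot (leftQuot (star X) (u ++ w)) (y₂ ++ (b.reverse ++ w)) =
        leftQuot (star X) (u ++ ((w ++ (y₂ ++ b.reverse)) ++ w)) := by
      intro u
      rw [← lq_append]
      simp only [List.append_assoc]
    have himg2 : (fun q => leftQuot q (y₂ ++ (b.reverse ++ w))) ''
        (Set.range fun u => leftQuot (star X) (u ++ w)) =
        (Set.range fun u => leftQuot (star X) (u ++ w)) := by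
      have himg : (fun q => leftQuot q (y₂ ++ (b.reverse ++ w))) ''
          (Set.range fun u => leftQuot (star X) (u ++ w)) =
          (Set.range fun u => leftQuot (star X) (u ++ ((w ++ (y₂ ++ b.reverse)) ++ w))) := by
        ext T
        constructor
        · rintro ⟨T', ⟨u, rfl⟩, rfl⟩
          exact ⟨u, (hcompat u).symm⟩
        · rintro ⟨u, rfl⟩
          exact ⟨leftQuot (star X) (u ++ w), ⟨u, rfl⟩, hcompat u⟩
      rw [himg, hIm_stable]
    have hmaps : Set.MapsTo (fun q => leftQuot q (y₂ ++ (b.reverse ++ w)))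
        (Set.range fun u => leftQuot (star X) (u ++ w))
        (Set.range fun u => leftQuot (star X) (u ++ w)) := by
      intro q hq
      rw [← himg2]; exact Set.mem_image_of_mem _ hq
    have hsurj : Set.SurjOn (fun q => leftQuot q (y₂ ++ (b.reverse ++ w)))
        (Set.range fun u => leftQuot (star X) (u ++ w))
        (Set.range fun u => leftQuot (star X) (u ++ w)) := by
      intro x hx
      rw [himg2]; exact hx
    have hinj : Set.InjOn (fun q => leftQuot q (y₂ ++ (b.reverse ++ w)))
        (Set.range fun u => leftQuot (star X) (u ++ w)) :=
      (((hfinIm w).surjOn_iff_bijOn_of_mapsTo hmaps).1 hsurj).injOn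
    have hfix : leftQuot (star X) (y₂ ++ (b.reverse ++ w)) = star X := hy₂
    have hkey : ∀ q ∈ (Set.range fun u => leftQuot (star X) (u ++ w)),
        (leftQuot q (y₂ ++ (b.reverse ++ w)) = star X ↔ q = star X) := by
      intro q hq
      constructor
      · intro h
        apply hinj hq hXstar_mem
        show leftQuot q (y₂ ++ (b.reverse ++ w)) =
          leftQuot (star X) (y₂ ++ (b.reverse ++ w))
        rw [h, hfix]
      · rintro rfl; exact hfix
    refine ⟨(c.reverse ++ (w ++ y₂)).reverse, ?_⟩
    rw [hK, hK]
    ext v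
    simp only [Set.mem_setOf_eq, List.reverse_append, List.reverse_reverse,
      List.append_assoc]
    have hsplit : v.reverse ++ (c.reverse ++ (w ++ (y₂ ++ (b.reverse ++ w)))) =
        (v.reverse ++ (c.reverse ++ w)) ++ (y₂ ++ (b.reverse ++ w)) := by
      simp [List.append_assoc]
    rw [hsplit, lq_append]
    refine hkey _ ⟨v.reverse ++ c.reverse, ?_⟩
    show leftQuot (star X) ((v.reverse ++ c.reverse) ++ w) =
      leftQuot (star X) (v.reverse ++ (c.reverse ++ w))
    rw [List.append_assoc]
  have hstar_stab : ∀ x ∈ star X, leftQuot S x = S := by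
    intro x hx
    rw [hSq]
    ext v
    simp only [Set.mem_setOf_eq]
    rw [lq_star_left hX hx (v ++ w), hmemS]
  have hstab_append : ∀ a b : List A, a ∈ stab S → b ∈ stab S → a ++ b ∈ stab S := by
    intro a b ha hb
    show leftQuot S (a ++ b) = S
    rw [lq_append, show leftQuot S a = S from ha, show leftQuot S b = S from hb]
  have hstab_cancel : ∀ a b : List A, a ∈ stab S → a ++ b ∈ stab S → b ∈ stab S := by
    intro a b ha hab
    have h : leftQuot S (a ++ b) = S := hab
    rw [lq_append, show leftQuot S a = S from ha] at h
    exact h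
  have hZpc : IsPrefixCode (leftRoot S) := by
    constructor
    · intro h; exact h.2.1 rfl
    · intro a ha b hb hab
      obtain ⟨r, rfl⟩ := hab
      have hr : r ∈ stab S := hstab_cancel a r ha.1 hb.1
      by_cases hr0 : r = []
      · rw [hr0, List.append_nil]
      · exact absurd ⟨a, r, ha.1, hr, ha.2.1, hr0, rfl⟩ hb.2.2
  have hstab_star : ∀ n (m : List A), m.length ≤ n → m ∈ stab S → m ∈ star (leftRoot S) := by
    intro n
    induction n with
    | zero =>
      intro m hm _
      have h0 : m = [] := List.length_eq_zero_iff.1 (Nat.le_zero.1 hm)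
      rw [h0]; exact nil_mem_star _
    | succ n ih =>
      intro m hm hmem
      by_cases hm0 : m = []
      · rw [hm0]; exact nil_mem_star _
      by_cases hmZ : m ∈ leftRoot S
      · exact mem_star _ hmZ
      · have hdec : ∃ a b : List A, a ∈ stab S ∧ b ∈ stab S ∧ a ≠ [] ∧ b ≠ [] ∧
            m = a ++ b := by
          by_contra hne
          exact hmZ ⟨hmem, hm0, hne⟩
        obtain ⟨a, b, ha, hb, ha0, hb0, rfl⟩ := hdec
        have hla : 1 ≤ a.length := List.length_pos_iff.2 ha0
        have hlb : 1 ≤ b.length := List.length_pos_iff.2 hb0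
        have hl := hm
        simp only [List.length_append] at hl
        exact star_append (ih a (by omega) ha) (ih b (by omega) hb)
  have hXsub : X ⊆ star (leftRoot S) := by
    intro x hx
    exact hstab_star x.length x le_rfl (hstar_stab x (mem_star X hx))
  rcases hind (leftRoot S) hZpc hXsub with hZA | hZX
  · exfalso
    have hall : ∀ u : List A, u ∈ stab S := by
      intro u
      induction u with
      | nil => show leftQuot S [] = S; exact lq_nil S
      | cons a u ihu =>
        have ha : [a] ∈ leftRoot S := by rw [hZA]; simp
        have h2 := hstab_append [a] u ha.1 ihu
        simpa using h2
    have h0 : ([] : List A) ∈ S := by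
      rw [hmemS, List.nil_append, hw_nil]
    have hSuniv : ∀ z : List A, z ∈ S := by
      intro z
      have hz : leftQuot S z = S := hall z
      have h1 : [] ∈ leftQuot S z := by rw [hz]; exact h0
      have h2 : z ++ [] ∈ S := h1
      rwa [List.append_nil] at h2
    have hsing : (Set.range fun u => leftQuot (star X) (u ++ w)) = {star X} := by
      ext T
      simp only [Set.mem_range, Set.mem_singleton_iff]
      constructor
      · rintro ⟨u, rfl⟩; exact (hmemS u).1 (hSuniv u)
      · rintro rfl; exact ⟨[], by rw [List.nil_append, hw_nil]⟩
    have h1 : mrank (star X) w = 1 := by rw [hmr, hsing, Set.ncard_singleton]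
    rw [hw_rank] at h1
    exact hdeg h1
  · exact ⟨S, hSdense, ⟨hSrecur, hRrec, fun u v _ _ => hRconn u v⟩, hZX⟩
end

section
/- Let S ⊆ A* be a recognizable set. If S is completely reducible over ℚ, then the eventual kernel and the eventual range of S intersect trivially: EK(S) ∩ ER(S) = {0}. -/
namespace Birec

variable {A : Type*}

/-- The characteristic series of a language, as a function `A* → ℚ`. -/
noncomputable def charFun (S : Set (List A)) : List A → ℚ := S.indicator 1

/-- The shift operator `τ ↦ τ · u`, where `(τ · u)(v) = τ(u v)`; this is the linear
action underlying the syntactic representation. -/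
def shiftOp (u : List A) : (List A → ℚ) →ₗ[ℚ] (List A → ℚ) where
  toFun τ := fun v => τ (u ++ v)
  map_add' := fun _ _ => rfl
  map_smul' := fun _ _ => rfl

/-- The syntactic space of a series `σ`: the subspace of `ℚ⟨⟨A⟩⟩` spanned by the
series `σ · u` for `u ∈ A*`. -/
def synSpace (σ : List A → ℚ) : Submodule ℚ (List A → ℚ) :=
  Submodule.span ℚ (Set.range fun u : List A => shiftOp u σ)

/-- A subspace is invariant if it is stable under all shift operators. -/
def InvariantSub (W : Submodule ℚ (List A → ℚ)) : Prop :=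
  ∀ τ ∈ W, ∀ u : List A, shiftOp u τ ∈ W

/-- An invariant subspace is irreducible if it is nonzero and has no nontrivial
invariant subspace. -/
def IrreducibleSub (W : Submodule ℚ (List A → ℚ)) : Prop :=
  W ≠ ⊥ ∧ ∀ W' : Submodule ℚ (List A → ℚ), W' ≤ W → InvariantSub W' → W' = ⊥ ∨ W' = W

/-- A series is completely reducible if its syntactic space is a direct sum of
invariant irreducible subspaces (equivalently, its syntactic representation is a
direct sum of irreducible representations). -/
def CompletelyReducibleSeries (σ : List A → ℚ) : Prop :=
  ∃ (n : ℕ) (W : Fin n → Submodule ℚ (List A → ℚ)),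
    (∀ i, W i ≤ synSpace σ ∧ InvariantSub (W i) ∧ IrreducibleSub (W i)) ∧
    iSupIndep W ∧ (⨆ i, W i) = synSpace σ

/-- A language is completely reducible if its characteristic series is. -/
noncomputable def CompletelyReducibleLang (S : Set (List A)) : Prop :=
  CompletelyReducibleSeries (charFun S)

/-- The rank of the element `ψ_σ(u)` of the syntactic monoid, i.e. the dimension of the
image of the syntactic space under the shift by `u`. -/
noncomputable def psiRank (σ : List A → ℚ) (u : List A) : ℕ :=
  Module.finrank ℚ ↥(Submodule.map (shiftOp u) (synSpace σ))

/-- `u` induces an element of minimal nonzero rank of the syntactic monoid. -/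
def IsMinNonzeroPsiRank (σ : List A → ℚ) (u : List A) : Prop :=
  psiRank σ u ≠ 0 ∧ ∀ v : List A, psiRank σ v ≠ 0 → psiRank σ u ≤ psiRank σ v

/-- The eventual kernel `EK(S)`: the intersection (inside the syntactic space) of the
kernels of all elements of minimal nonzero rank of the syntactic monoid. -/
noncomputable def EK (S : Set (List A)) : Submodule ℚ (List A → ℚ) :=
  synSpace (charFun S) ⊓
    ⨅ u ∈ {u : List A | IsMinNonzeroPsiRank (charFun S) u}, LinearMap.ker (shiftOp u)

/-- The eventual range `ER(S)`: the subspace spanned by the images of all elements of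
minimal nonzero rank of the syntactic monoid. -/
noncomputable def ER (S : Set (List A)) : Submodule ℚ (List A → ℚ) :=
  ⨆ u ∈ {u : List A | IsMinNonzeroPsiRank (charFun S) u},
    Submodule.map (shiftOp u) (synSpace (charFun S))

end Birec

/-! Shifting by a word can only lower the rank, so `EK(S)` and `ER(S)` are invariant subspaces
of the syntactic space `V`, and so is `Y = EK(S) ∩ ER(S)`. Complete reducibility gives an
invariant complement `X` of `Y` in `V`. A shift of minimal nonzero rank kills `Y ⊆ EK(S)`, so it
maps `V = Y ⊕ X` into `X`; hence `ER(S) ⊆ X`, and `Y ⊆ X ∩ Y = 0`. -/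

namespace Birec

variable {A : Type*}

lemma shiftOp_apply (u : List A) (τ : List A → ℚ) (v : List A) :
    shiftOp u τ v = τ (u ++ v) := rfl

lemma shiftOp_shiftOp (u v : List A) (τ : List A → ℚ) :
    shiftOp v (shiftOp u τ) = shiftOp (u ++ v) τ := by
  funext w
  simp only [shiftOp_apply, List.append_assoc]

section ShiftAlgebra

/-- Since `u ↦ shiftOp u` reverses products, we use the algebra generated by its image rather
than a monoid algebra of `A*`. -/
abbrev shiftAlgebra (A : Type*) : Subalgebra ℚ (Module.End ℚ (List A → ℚ)) :=
  Algebra.adjoin ℚ (Set.range shiftOp)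

-- Instance search does not find these two on its own for the function space `List A → ℚ`.
instance : IsScalarTower ℚ (shiftAlgebra A) (List A → ℚ) := Subalgebra.isScalarTower_mid _

instance : IsModularLattice (Submodule (shiftAlgebra A) (List A → ℚ)) :=
  Submodule.instIsModularLattice (R := shiftAlgebra A)

lemma invariantSub_restrictScalars (P : Submodule (shiftAlgebra A) (List A → ℚ)) :
    InvariantSub (P.restrictScalars ℚ) :=
  fun _ hτ u => P.smul_mem ⟨shiftOp u, Algebra.subset_adjoin ⟨u, rfl⟩⟩ hτ

def InvariantSub.lift {W : Submodule ℚ (List A → ℚ)} (hW : InvariantSub W) :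
    Submodule (shiftAlgebra A) (List A → ℚ) where
  toAddSubmonoid := W.toAddSubmonoid
  smul_mem' := by
    rintro ⟨f, hf⟩ τ hτ
    change f τ ∈ W
    induction hf using Algebra.adjoin_induction generalizing τ with
    | mem f hf => obtain ⟨u, rfl⟩ := hf; exact hW τ hτ u
    | algebraMap c => exact W.smul_mem c hτ
    | add f g _ _ hf hg => exact W.add_mem (hf hτ) (hg hτ)
    | mul f g _ _ hf hg => exact hf (hg hτ)

lemma InvariantSub.restrictScalars_lift {W : Submodule ℚ (List A → ℚ)} (hW : InvariantSub W) :
    hW.lift.restrictScalars ℚ = W := rfl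

lemma IrreducibleSub.isAtom_lift {W : Submodule ℚ (List A → ℚ)} (hirr : IrreducibleSub W)
    (hW : InvariantSub W) : IsAtom hW.lift := by
  refine ⟨fun h => hirr.1 (by rw [← hW.restrictScalars_lift, h, Submodule.restrictScalars_bot]),
    fun Q hQ => ?_⟩
  rcases hirr.2 (Q.restrictScalars ℚ) hQ.le (invariantSub_restrictScalars Q) with h | h
  · exact (Submodule.restrictScalars_eq_bot_iff ℚ _ _).mp h
  · exact absurd (Submodule.restrictScalars_injective ℚ _ _ h) hQ.ne

theorem exists_invariantSub_disjoint_sup_eq {ι : Type*} {W : ι → Submodule ℚ (List A → ℚ)}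
    (hW : ∀ i, InvariantSub (W i) ∧ IrreducibleSub (W i)) {Y : Submodule ℚ (List A → ℚ)}
    (hY : InvariantSub Y) (hYW : Y ≤ ⨆ i, W i) :
    ∃ X, InvariantSub X ∧ Disjoint Y X ∧ Y ⊔ X = ⨆ i, W i := by
  set V := ⨆ i, (hW i).1.lift
  have hV : V.restrictScalars ℚ = ⨆ i, W i := Submodule.restrictScalars_iSup ℚ _
  have hatoms : sSup {a ≤ V | IsAtom a} = V :=
    le_antisymm (sSup_le fun _ ha => ha.1)
      (iSup_le fun i => le_sSup ⟨le_iSup (fun i => (hW i).1.lift) i, (hW i).2.isAtom_lift (hW i).1⟩)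
  obtain ⟨s, -, hdisj, hsup, -⟩ := exists_sSupIndep_disjoint_sSup_atoms hY.lift V
    (by rwa [← Submodule.restrictScalars_le ℚ, hV]) hatoms
  refine ⟨(sSup s).restrictScalars ℚ, invariantSub_restrictScalars _,
    (Submodule.disjoint_restrictScalars_iff ℚ).mpr hdisj, ?_⟩
  rw [← hV, ← hsup, Submodule.restrictScalars_sup, hY.restrictScalars_lift]

end ShiftAlgebra

lemma invariantSub_synSpace (σ : List A → ℚ) : InvariantSub (synSpace σ) := by
  intro τ hτ u
  induction hτ using Submodule.span_induction with
  | mem x hx =>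
    obtain ⟨w, rfl⟩ := hx
    rw [shiftOp_shiftOp]
    exact Submodule.subset_span ⟨w ++ u, rfl⟩
  | zero => rw [map_zero]; exact Submodule.zero_mem _
  | add x y _ _ hx hy => rw [map_add]; exact Submodule.add_mem _ hx hy
  | smul c x _ hx => rw [map_smul]; exact Submodule.smul_mem _ _ hx

lemma InvariantSub.map_shiftOp_le {W : Submodule ℚ (List A → ℚ)} (hW : InvariantSub W)
    (u : List A) : W.map (shiftOp u) ≤ W := by
  rintro _ ⟨τ, hτ, rfl⟩
  exact hW τ hτ u

/-- The shifts `charFun S · u` are the indicators of the finitely many left quotients `u⁻¹S`. -/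
lemma finiteDimensional_synSpace {S : Set (List A)} (hrec : Recognizable S) :
    FiniteDimensional ℚ (synSpace (charFun S)) := by
  refine FiniteDimensional.span_of_finite ℚ ((hrec.image fun Q => Q.indicator 1).subset ?_)
  rintro _ ⟨u, rfl⟩
  exact ⟨leftQuot S u, ⟨u, rfl⟩, rfl⟩

lemma map_shiftOp_append (σ : List A → ℚ) (u v : List A) :
    (synSpace σ).map (shiftOp (u ++ v)) = ((synSpace σ).map (shiftOp u)).map (shiftOp v) := by
  rw [← Submodule.map_comp]
  congr 1
  exact LinearMap.ext fun τ => (shiftOp_shiftOp u v τ).symm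

lemma IsMinNonzeroPsiRank.of_psiRank_le {σ : List A → ℚ} {u v : List A}
    (hu : IsMinNonzeroPsiRank σ u) (hv : psiRank σ v ≠ 0) (hvu : psiRank σ v ≤ psiRank σ u) :
    IsMinNonzeroPsiRank σ v :=
  ⟨hv, fun w hw => hvu.trans (hu.2 w hw)⟩

section FiniteDimensional

variable {σ : List A → ℚ} [FiniteDimensional ℚ (synSpace σ)]

lemma shiftOp_eq_zero_of_psiRank_eq_zero {u : List A} (h : psiRank σ u = 0)
    {τ : List A → ℚ} (hτ : τ ∈ synSpace σ) : shiftOp u τ = 0 := by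
  have hbot : (synSpace σ).map (shiftOp u) = ⊥ := Submodule.finrank_eq_zero.mp h
  exact (Submodule.mem_bot ℚ).mp (hbot ▸ Submodule.mem_map_of_mem hτ)

lemma psiRank_append_le_left (u w : List A) : psiRank σ (u ++ w) ≤ psiRank σ u := by
  rw [psiRank, map_shiftOp_append]
  exact Submodule.finrank_map_le _ _

lemma psiRank_append_le_right (w u : List A) : psiRank σ (w ++ u) ≤ psiRank σ u := by
  rw [psiRank, map_shiftOp_append]
  exact Submodule.finrank_mono (Submodule.map_mono ((invariantSub_synSpace σ).map_shiftOp_le w))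

end FiniteDimensional

lemma mem_EK {S : Set (List A)} {τ : List A → ℚ} :
    τ ∈ EK S ↔ τ ∈ synSpace (charFun S) ∧
      ∀ u, IsMinNonzeroPsiRank (charFun S) u → shiftOp u τ = 0 := by
  simp [EK, Submodule.mem_iInf]

lemma invariantSub_EK {S : Set (List A)} (hrec : Recognizable S) : InvariantSub (EK S) := by
  have := finiteDimensional_synSpace hrec
  intro τ hτ w
  rw [mem_EK] at hτ ⊢
  refine ⟨invariantSub_synSpace _ τ hτ.1 w, fun u hu => ?_⟩
  rw [shiftOp_shiftOp]
  by_cases h0 : psiRank (charFun S) (w ++ u) = 0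
  · exact shiftOp_eq_zero_of_psiRank_eq_zero h0 hτ.1
  · exact hτ.2 _ (hu.of_psiRank_le h0 (psiRank_append_le_right w u))

lemma invariantSub_ER {S : Set (List A)} (hrec : Recognizable S) : InvariantSub (ER S) := by
  have := finiteDimensional_synSpace hrec
  intro τ hτ w
  refine (iSup₂_le fun u hu => ?_ : ER S ≤ (ER S).comap (shiftOp w)) hτ
  rintro _ ⟨y, hy, rfl⟩
  rw [Submodule.mem_comap, shiftOp_shiftOp]
  by_cases h0 : psiRank (charFun S) (u ++ w) = 0
  · rw [shiftOp_eq_zero_of_psiRank_eq_zero h0 hy]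
    exact Submodule.zero_mem _
  · exact Submodule.mem_iSup_of_mem (u ++ w) (Submodule.mem_iSup_of_mem
      (hu.of_psiRank_le h0 (psiRank_append_le_left u w)) (Submodule.mem_map_of_mem hy))

lemma ER_le_of_sup_eq {S : Set (List A)} {X Y : Submodule ℚ (List A → ℚ)} (hX : InvariantSub X)
    (hY : Y ≤ EK S) (hYX : Y ⊔ X = synSpace (charFun S)) : ER S ≤ X := by
  refine iSup₂_le fun u hu => ?_
  rw [← hYX, Submodule.map_sup]
  refine sup_le ?_ (hX.map_shiftOp_le u)
  rintro _ ⟨y, hy, rfl⟩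
  rw [(mem_EK.mp (hY hy)).2 u hu]
  exact X.zero_mem

end Birec

open Birec

theorem ek_inf_er_eq_bot_general {A : Type*} (S : Set (List A))
    (hrec : Recognizable S) (hcr : CompletelyReducibleLang S) :
    EK S ⊓ ER S = ⊥ := by
  obtain ⟨_, W, hW, -, hsup⟩ := hcr
  have hYinv : InvariantSub (EK S ⊓ ER S) := fun τ hτ u =>
    ⟨invariantSub_EK hrec τ hτ.1 u, invariantSub_ER hrec τ hτ.2 u⟩
  obtain ⟨X, hX, hdisj, hYX⟩ := exists_invariantSub_disjoint_sup_eq (fun i => (hW i).2) hYinv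
    (hsup ▸ inf_le_left.trans inf_le_left)
  rw [hsup] at hYX
  exact hdisj.eq_bot_of_le (inf_le_right.trans (ER_le_of_sup_eq hX inf_le_left hYX))

/-- **Proposition.** Let `S` be a recognizable set.  If `S` is completely reducible
over `ℚ`, then the eventual kernel and the eventual range of `S` intersect trivially:
`EK(S) ∩ ER(S) = {0}`. -/
theorem ek_inf_er_eq_bot {A : Type*} [Fintype A] (S : Set (List A))
    (hrec : Recognizable S) (hcr : CompletelyReducibleLang S) :
    EK S ⊓ ER S = ⊥ :=
  ek_inf_er_eq_bot_general S hrec hcr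
end

section
/- Let S ∈ ℚ⟨⟨A⟩⟩ be a birecurrent series (a rational series, with finite set of coefficients, such that both S and its reversal S̃ are recurrent). Then S is a ℚ-linear combination of characteristic series of birecurrent sets. -/
namespace Birec

variable {A : Type*}

/-- A series is rational with a finite set of coefficients iff it has finitely many
left quotients `u⁻¹σ` (Nerode criterion for series). -/
def SeriesRecognizable (σ : List A → ℚ) : Prop :=
  (Set.range fun u : List A => (shiftOp u σ : List A → ℚ)).Finite

/-- A rational series with a finite set of coefficients is recurrent if its minimal
deterministic automaton with scalar output function, whose states are the nonzero
quotients `u⁻¹σ`, is strongly connected. -/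
def SeriesRecurrent (σ : List A → ℚ) : Prop :=
  SeriesRecognizable σ ∧
    ∀ u v : List A, shiftOp u σ ≠ 0 → shiftOp v σ ≠ 0 →
      ∃ w : List A, shiftOp (u ++ w) σ = shiftOp v σ

/-- The reversal of a series. -/
def seriesRev (σ : List A → ℚ) : List A → ℚ := fun w => σ w.reverse

/-- A series is birecurrent if both it and its reversal are recurrent. -/
def SeriesBirecurrent (σ : List A → ℚ) : Prop :=
  SeriesRecurrent σ ∧ SeriesRecurrent (seriesRev σ)

end Birec

namespace Birec

variable {A : Type*}

lemma leftQuot_preimage' (σ : List A → ℚ) (r : ℚ) (u : List A) :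
    leftQuot (σ ⁻¹' {r}) u = (shiftOp u σ : List A → ℚ) ⁻¹' {r} := rfl

lemma level_recurrent {σ : List A → ℚ} {r : ℚ} (hr : r ≠ 0)
    (h : SeriesRecurrent σ) : Recurrent (σ ⁻¹' {r}) := by
  constructor
  · apply Set.Finite.subset (h.1.image (fun τ : List A → ℚ => τ ⁻¹' {r}))
    rintro _ ⟨u, rfl⟩
    exact ⟨shiftOp u σ, ⟨u, rfl⟩, (leftQuot_preimage' σ r u).symm⟩
  · rintro u v ⟨x, hx⟩ ⟨y, hy⟩
    have hux : σ (u ++ x) = r := hx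
    have hu : shiftOp u σ ≠ 0 := by
      intro h0
      have : (shiftOp u σ : List A → ℚ) x = r := hux
      rw [h0] at this
      exact hr this.symm
    have hv : shiftOp v σ ≠ 0 := by
      intro h0
      have hvy : σ (v ++ y) = r := hy
      have : (shiftOp v σ : List A → ℚ) y = r := hvy
      rw [h0] at this
      exact hr this.symm
    obtain ⟨w, hw⟩ := h.2 u v hu hv
    exact ⟨w, by rw [leftQuot_preimage', leftQuot_preimage', hw]⟩

lemma langRev_preimage (σ : List A → ℚ) (r : ℚ) :
    langRev (σ ⁻¹' {r}) = seriesRev σ ⁻¹' {r} := rfl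

end Birec

open Birec

/-- **Proposition.** Let `S` be a birecurrent series.  Then `S` is a linear combination
over `ℚ` of characteristic series of birecurrent sets. -/
theorem birecurrent_series_linear_combination {A : Type*} [Fintype A]
    (σ : List A → ℚ) (hσ : SeriesBirecurrent σ) :
    ∃ (n : ℕ) (c : Fin n → ℚ) (L : Fin n → Set (List A)),
      (∀ i, Birecurrent (L i)) ∧ σ = ∑ i, c i • charFun (L i) := by
  obtain ⟨h1, h2⟩ := hσ
  have hranfin : (Set.range σ).Finite := by
    apply Set.Finite.subset (h1.1.image (fun τ : List A → ℚ => τ []))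
    rintro _ ⟨w, rfl⟩
    exact ⟨shiftOp w σ, ⟨w, rfl⟩, by simp [shiftOp]⟩
  classical
  set V : Finset ℚ := hranfin.toFinset.erase 0 with hV
  have hVne : ∀ r ∈ V, r ≠ 0 := fun r hr => (Finset.mem_erase.mp hr).1
  refine ⟨V.card, fun i => (V.equivFin.symm i : ℚ),
    fun i => σ ⁻¹' {(V.equivFin.symm i : ℚ)}, ?_, ?_⟩
  · intro i
    have hne : ((V.equivFin.symm i : ℚ)) ≠ 0 := hVne _ (V.equivFin.symm i).2
    exact ⟨level_recurrent hne h1, by rw [langRev_preimage]; exact level_recurrent hne h2⟩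
  · funext w
    have hsum : ∀ (f : ℚ → ℚ), ∑ i : Fin V.card, f (V.equivFin.symm i : ℚ)
        = ∑ r ∈ V, f r := by
      intro f
      rw [← Equiv.sum_comp V.equivFin (fun i => f (V.equivFin.symm i : ℚ))]
      simp only [Equiv.symm_apply_apply]
      exact Finset.sum_attach V f
    simp only [Finset.sum_apply, Pi.smul_apply, charFun, smul_eq_mul]
    rw [hsum (fun r => r * (σ ⁻¹' {r}).indicator 1 w)]
    have : ∀ r : ℚ, r * (σ ⁻¹' {r}).indicator 1 w = if r = σ w then r else 0 := by
      intro r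
      by_cases h : r = σ w
      · subst h; simp [Set.indicator_apply]
      · simp [Set.indicator_apply, h, Ne.symm h]
    simp_rw [this]
    rw [Finset.sum_ite_eq' V (σ w) (fun x => x)]
    by_cases h0 : σ w = 0
    · simp [h0, hV]
    · have : σ w ∈ V := Finset.mem_erase.mpr ⟨h0, hranfin.mem_toFinset.mpr ⟨w, rfl⟩⟩
      simp [this]
end
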